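/- arXiv:2108.04789 — 7 statements merged into one kernel-verified Lean document; each statement's English description precedes it below -/
import Mathlib

section
/- Let $T'$ be a finite rooted tree and $g,h : T' \to [0,\infty)$. Assume $g$ is superadditive, i.e. for every vertex $\beta$, $g(\beta) \geq \sum_{\beta' \in \mathrm{ch}(\beta)} g(\beta')$, and that the partial sums $Ih(\alpha) = \sum_{\alpha' \geq \alpha} h(\alpha')$ satisfy $Ih \leq \lambda$ on the support of $g$. Then for every $\beta \in T'$, $\sum_{\alpha \leq \beta} g(\alpha) h(\alpha) \leq \lambda\, g(\beta)$. -/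
open Finset
open scoped Classical

/-- Hardy operator on a finite poset: sum over all elements above `α` (towards the root). -/
noncomputable def treeI {T : Type*} [Fintype T] [PartialOrder T] (h : T → ℝ) (α : T) : ℝ :=
  ∑ α' ∈ Finset.univ.filter (fun α' => α ≤ α'), h α'

/-- Adjoint operator: sum over all elements below `α`. -/
noncomputable def treeIStar {T : Type*} [Fintype T] [PartialOrder T] (h : T → ℝ) (α : T) : ℝ :=
  ∑ α' ∈ Finset.univ.filter (fun α' => α' ≤ α), h α'

/-- Children of a vertex: maximal elements strictly below it, i.e. elements covered by it. -/
noncomputable def chSet {T : Type*} [Fintype T] [PartialOrder T] (β : T) : Finset T :=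
  Finset.univ.filter (fun β' => β' ⋖ β)

/-- `g` is superadditive: at every vertex, the sum over children is at most the value. -/
def Superadditive {T : Type*} [Fintype T] [PartialOrder T] (g : T → ℝ) : Prop :=
  ∀ β : T, ∑ β' ∈ chSet β, g β' ≤ g β

/-- A finite rooted tree: a poset with a unique top (root) in which the set of elements
above any given element is totally ordered. -/
def IsRootedTree (T : Type*) [PartialOrder T] : Prop :=
  (∃ root : T, ∀ a : T, a ≤ root) ∧
    ∀ a b c : T, a ≤ b → a ≤ c → b ≤ c ∨ c ≤ b

section AuxLemmas
variable {T : Type*} [Fintype T] [PartialOrder T]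

lemma exists_child_above {α β : T} (hlt : α < β) :
    ∃ β', β' ⋖ β ∧ α ≤ β' := by
  obtain ⟨m, hm, hmax⟩ := Finset.exists_maximal
    (s := Finset.univ.filter (fun γ => α ≤ γ ∧ γ < β)) ⟨α, by simp [hlt]⟩
  simp only [Finset.mem_filter, Finset.mem_univ, true_and] at hm
  refine ⟨m, ⟨hm.2, ?_⟩, hm.1⟩
  intro c hc1 hc2
  have hmem : c ∈ Finset.univ.filter (fun γ => α ≤ γ ∧ γ < β) := by
    simp only [Finset.mem_filter, Finset.mem_univ, true_and]
    exact ⟨hm.1.trans hc1.le, hc2⟩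
  exact not_le_of_gt hc1 (hmax hmem hc1.le)

lemma below_decomp (β : T) :
    (Finset.univ.filter (fun α => α ≤ β)) =
      insert β ((chSet β).biUnion (fun β' => Finset.univ.filter (fun α => α ≤ β'))) := by
  ext α
  simp only [Finset.mem_insert, Finset.mem_biUnion, Finset.mem_filter, Finset.mem_univ,
    true_and, chSet]
  constructor
  · intro hαβ
    rcases eq_or_lt_of_le hαβ with h1 | h1
    · exact Or.inl h1
    · obtain ⟨β', hc, hle⟩ := exists_child_above h1
      exact Or.inr ⟨β', hc, hle⟩
  · rintro (rfl | ⟨β', hc, hle⟩)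
    · exact le_refl _
    · exact hle.trans hc.1.le

lemma sum_below_decomp (hT : IsRootedTree T) (f : T → ℝ) (β : T) :
    ∑ α ∈ Finset.univ.filter (fun α => α ≤ β), f α =
      f β + ∑ β' ∈ chSet β, ∑ α ∈ Finset.univ.filter (fun α => α ≤ β'), f α := by
  rw [below_decomp β, Finset.sum_insert, Finset.sum_biUnion]
  · -- pairwise disjoint
    intro β₁ h1 β₂ h2 hne
    simp only [chSet, Finset.coe_filter, Set.mem_setOf_eq, Finset.mem_univ, true_and] at h1 h2
    simp only [Function.onFun]
    rw [Finset.disjoint_left]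
    intro a ha1 ha2
    simp only [Finset.mem_filter, Finset.mem_univ, true_and] at ha1 ha2
    rcases hT.2 a β₁ β₂ ha1 ha2 with hcmp | hcmp
    · rcases eq_or_lt_of_le hcmp with he | hl
      · exact hne he
      · exact h1.2 hl h2.1
    · rcases eq_or_lt_of_le hcmp with he | hl
      · exact hne he.symm
      · exact h2.2 hl h1.1
  · -- β not in the biUnion
    simp only [Finset.mem_biUnion, Finset.mem_filter, Finset.mem_univ, true_and, chSet,
      not_exists]
    intro β' hc
    exact absurd (hc.2.trans_lt hc.1.1) (lt_irrefl β)

lemma treeI_child (hT : IsRootedTree T) (h : T → ℝ) {β' β : T} (hc : β' ⋖ β) :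
    treeI h β' = h β' + treeI h β := by
  unfold treeI
  have hset : (Finset.univ.filter (fun γ => β' ≤ γ)) =
      insert β' (Finset.univ.filter (fun γ => β ≤ γ)) := by
    ext γ
    simp only [Finset.mem_insert, Finset.mem_filter, Finset.mem_univ, true_and]
    constructor
    · intro hγ
      rcases eq_or_lt_of_le hγ with h1 | h1
      · exact Or.inl h1.symm
      · right
        rcases hT.2 β' γ β h1.le hc.1.le with h2 | h2
        · rcases eq_or_lt_of_le h2 with he | hl
          · exact he.ge
          · exact absurd hl (hc.2 h1)
        · exact h2
    · rintro (rfl | h2)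
      · exact le_refl _
      · exact hc.1.le.trans h2
  rw [hset, Finset.sum_insert]
  simp only [Finset.mem_filter, Finset.mem_univ, true_and]
  intro hle
  exact absurd (hc.1.trans_le hle) (lt_irrefl β')

end AuxLemmas

/-- if `g` is superadditive and `Ih ≤ λ` on the support of `g`, then
`∑_{α ≤ β} g(α) h(α) ≤ λ g(β)` for every `β`. -/
theorem stmt_0 {T : Type*} [Fintype T] [PartialOrder T] (hT : IsRootedTree T)
    (g h : T → ℝ) (lam : ℝ)
    (hg : ∀ a, 0 ≤ g a) (hh : ∀ a, 0 ≤ h a)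
    (hsup : Superadditive g)
    (hIh : ∀ a, g a ≠ 0 → treeI h a ≤ lam) :
    ∀ β : T, ∑ α ∈ Finset.univ.filter (fun α => α ≤ β), g α * h α ≤ lam * g β := by
  have key : ∀ β : T, ∑ α ∈ Finset.univ.filter (fun α => α ≤ β), g α * h α ≤
      g β * (lam - treeI h β + h β) := by
    intro β
    induction β using WellFoundedLT.induction with
    | ind β IH =>
      rw [sum_below_decomp hT _ β]
      have hch : ∀ β' ∈ chSet β, ∑ α ∈ Finset.univ.filter (fun α => α ≤ β'), g α * h α ≤
          g β' * (lam - treeI h β) := by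
        intro β' hβ'
        have hc : β' ⋖ β := by simpa [chSet] using hβ'
        calc ∑ α ∈ Finset.univ.filter (fun α => α ≤ β'), g α * h α
            ≤ g β' * (lam - treeI h β' + h β') := IH β' hc.1
          _ = g β' * (lam - treeI h β) := by rw [treeI_child hT h hc]; ring
      by_cases hgβ : g β = 0
      · -- everything vanishes
        have hsum0 : ∑ β' ∈ chSet β, g β' = 0 := by
          refine le_antisymm ((hsup β).trans_eq hgβ) ?_
          exact Finset.sum_nonneg fun i _ => hg i
        have hz : ∀ β' ∈ chSet β, g β' = 0 :=
          (Finset.sum_eq_zero_iff_of_nonneg fun i _ => hg i).mp hsum0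
        have hle0 : ∑ β' ∈ chSet β, ∑ α ∈ Finset.univ.filter (fun α => α ≤ β'), g α * h α
            ≤ 0 := by
          refine Finset.sum_nonpos fun β' hβ' => ?_
          have := hch β' hβ'
          rw [hz β' hβ'] at this
          simpa using this
        rw [hgβ]
        simpa using hle0
      · have hlam : 0 ≤ lam - treeI h β := by
          have := hIh β hgβ
          linarith
        calc g β * h β + ∑ β' ∈ chSet β, ∑ α ∈ Finset.univ.filter (fun α => α ≤ β'), g α * h α
            ≤ g β * h β + ∑ β' ∈ chSet β, g β' * (lam - treeI h β) :=
              add_le_add le_rfl (Finset.sum_le_sum hch)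
          _ = g β * h β + (∑ β' ∈ chSet β, g β') * (lam - treeI h β) := by
              rw [Finset.sum_mul]
          _ ≤ g β * h β + g β * (lam - treeI h β) := by
              have := mul_le_mul_of_nonneg_right (hsup β) hlam
              linarith
          _ = g β * (lam - treeI h β + h β) := by ring
  intro β
  refine (key β).trans ?_
  have hIge : h β ≤ treeI h β := by
    unfold treeI
    exact Finset.single_le_sum (fun i _ => hh i) (by simp)
  nlinarith [hg β]
end

section
/- Let $I$ be a linear operator given by integration against a nonnegative kernel $K$, i.e. $If(x) = \int K(x,y) f(y)\,dy$, and let $f, g$ be nonnegative functions. Then $\int (If)^2 g \leq \left( \sup_{\mathrm{supp}\, g} II^* g \right) \int f^2$, where $I^*$ denotes the adjoint operator $I^*h(y) = \int K(x,y) h(x)\,dx$. -/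
open Finset

/-- for an integral operator `I` with nonnegative kernel `K` on finite sets
(counting measure) and nonnegative `f, g`:
`∫ (If)² g ≤ (sup_{supp g} II*g) ∫ f²`. -/
theorem stmt_1 {X Y : Type*} [Fintype X] [Fintype Y]
    (K : X → Y → ℝ) (hK : ∀ x y, 0 ≤ K x y)
    (f : Y → ℝ) (g : X → ℝ) (hf : ∀ y, 0 ≤ f y) (hg : ∀ x, 0 ≤ g x) :
    ∑ x, (∑ y, K x y * f y) ^ 2 * g x ≤
      (⨆ x ∈ {x : X | g x ≠ 0}, ∑ y, K x y * (∑ x', K x' y * g x')) * ∑ y, (f y) ^ 2 := by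
  set h : Y → ℝ := fun y => ∑ x', K x' y * g x' with hh
  set T : X → ℝ := fun x => ∑ y, K x y * h y with hTdef
  set S : X → ℝ := fun x => ∑ y, K x y * f y ^ 2 / h y with hSdef
  have hh0 : ∀ y, 0 ≤ h y := fun y => sum_nonneg fun x _ => mul_nonneg (hK x y) (hg x)
  have hS0 : ∀ x, 0 ≤ S x :=
    fun x => sum_nonneg fun y _ => div_nonneg (mul_nonneg (hK x y) (sq_nonneg _)) (hh0 y)
  set M := ⨆ x ∈ {x : X | g x ≠ 0}, T x with hMdef
  have hM0 : 0 ≤ M :=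
    Real.iSup_nonneg fun x => Real.iSup_nonneg fun _ =>
      sum_nonneg fun y _ => mul_nonneg (hK x y) (hh0 y)
  have hTM : ∀ x, g x ≠ 0 → T x ≤ M := by
    intro x hx
    have hx' : x ∈ {x : X | g x ≠ 0} := hx
    calc T x = ⨆ _ : x ∈ {x : X | g x ≠ 0}, T x := (ciSup_pos (f := fun _ => T x) hx').symm
      _ ≤ M := le_ciSup (f := fun x => ⨆ _ : x ∈ {x : X | g x ≠ 0}, T x)
          (Set.Finite.bddAbove (Set.finite_range _)) x
  have key : ∀ x, g x ≠ 0 → (∑ y, K x y * f y) ^ 2 ≤ T x * S x := by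
    intro x hx
    have hKy : ∀ y, h y = 0 → K x y = 0 := by
      intro y hy
      have := (Finset.sum_eq_zero_iff_of_nonneg
        (fun x' _ => mul_nonneg (hK x' y) (hg x'))).1 hy x (mem_univ x)
      exact (mul_eq_zero.1 this).resolve_right hx
    set a : Y → ℝ := fun y => Real.sqrt (K x y * h y) with ha
    set b : Y → ℝ := fun y => Real.sqrt (K x y) * f y / Real.sqrt (h y) with hb
    have hab : ∀ y, K x y * f y = a y * b y := by
      intro y
      by_cases hy : h y = 0
      · simp [ha, hb, hKy y hy, hy]
      · have hs : Real.sqrt (h y) ≠ 0 := by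
          simpa [Real.sqrt_eq_zero' ] using lt_of_le_of_ne (hh0 y) (Ne.symm hy)
        calc K x y * f y
            = (Real.sqrt (K x y) * Real.sqrt (K x y)) * f y
              * (Real.sqrt (h y) / Real.sqrt (h y)) := by
              rw [Real.mul_self_sqrt (hK x y), div_self hs, mul_one]
          _ = a y * b y := by
              simp only [ha, hb, Real.sqrt_mul (hK x y)]
              ring
    have ha2 : ∀ y, a y ^ 2 = K x y * h y :=
      fun y => Real.sq_sqrt (mul_nonneg (hK x y) (hh0 y))
    have hb2 : ∀ y, b y ^ 2 = K x y * f y ^ 2 / h y := by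
      intro y
      simp only [hb, div_pow, mul_pow, Real.sq_sqrt (hK x y), Real.sq_sqrt (hh0 y)]
    calc (∑ y, K x y * f y) ^ 2 = (∑ y, a y * b y) ^ 2 := by simp_rw [hab]
      _ ≤ (∑ y, a y ^ 2) * (∑ y, b y ^ 2) := Finset.sum_mul_sq_le_sq_mul_sq _ _ _
      _ = T x * S x := by simp_rw [ha2, hb2]; rfl
  have swap : ∑ x, S x * g x = ∑ y, f y ^ 2 / h y * h y := by
    calc ∑ x, S x * g x = ∑ x, ∑ y, f y ^ 2 / h y * (K x y * g x) := by
          refine sum_congr rfl fun x _ => ?_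
          rw [hSdef]
          rw [sum_mul]
          exact sum_congr rfl fun y _ => by ring
      _ = ∑ y, ∑ x, f y ^ 2 / h y * (K x y * g x) := Finset.sum_comm
      _ = ∑ y, f y ^ 2 / h y * h y := by
          refine sum_congr rfl fun y _ => ?_
          rw [← mul_sum]
  calc ∑ x, (∑ y, K x y * f y) ^ 2 * g x ≤ ∑ x, (M * S x) * g x := by
        refine sum_le_sum fun x _ => ?_
        by_cases hx : g x = 0
        · simp [hx]
        · exact mul_le_mul_of_nonneg_right
            ((key x hx).trans (mul_le_mul_of_nonneg_right (hTM x hx) (hS0 x))) (hg x)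
    _ = M * ∑ y, f y ^ 2 / h y * h y := by
        rw [← swap, Finset.mul_sum]
        exact sum_congr rfl fun x _ => by ring
    _ ≤ M * ∑ y, f y ^ 2 := by
        refine mul_le_mul_of_nonneg_left (sum_le_sum fun y _ => ?_) hM0
        by_cases hy : h y = 0
        · simp [hy, sq_nonneg]
        · rw [div_mul_cancel₀ _ hy]
end

section
/- Let $T$ be a finite rooted tree, $f, g : T \to [0,\infty)$ with $g$ superadditive, $Ig \leq \lambda$ on all of $T$, and $\mathrm{supp}\, f \subseteq \{Ig \leq \delta\}$. Then $\|If \cdot g\|_{\ell^\infty(T)} \leq \delta\, \|f\|_{\ell^\infty(T)}$. -/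
open Finset
open scoped Classical

/-- if `g` is superadditive, `Ig ≤ λ` on all of `T` and
`supp f ⊆ {Ig ≤ δ}`, then `‖If · g‖_∞ ≤ δ ‖f‖_∞`. -/
theorem stmt_3 {T : Type*} [Fintype T] [Nonempty T] [PartialOrder T] (hT : IsRootedTree T)
    (f g : T → ℝ) (δ lam : ℝ)
    (hf : ∀ a, 0 ≤ f a) (hg : ∀ a, 0 ≤ g a)
    (hsup : Superadditive g)
    (hlam : ∀ α : T, treeI g α ≤ lam)
    (hδ : ∀ α : T, f α ≠ 0 → treeI g α ≤ δ) :
    ∀ α : T, treeI f α * g α ≤ δ * ⨆ a : T, f a := by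
  -- g is monotone
  have gmono : ∀ b a : T, a ≤ b → g a ≤ g b := by
    intro b
    induction b using WellFoundedLT.induction with
    | _ b IH =>
      intro a hab
      rcases eq_or_lt_of_le hab with rfl | hlt
      · exact le_rfl
      · -- find a maximal element c with a ≤ c < b
        have hne : (Finset.univ.filter (fun x : T => a ≤ x ∧ x < b)).Nonempty :=
          ⟨a, by simp [hlt]⟩
        obtain ⟨c, hc, hcmax⟩ : ∃ c ∈ Finset.univ.filter (fun x : T => a ≤ x ∧ x < b), ∀ x ∈ Finset.univ.filter (fun x : T => a ≤ x ∧ x < b), ¬ c < x := by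
          obtain ⟨c, hc⟩ := Finset.exists_maximal hne
          exact ⟨c, hc.1, fun x hx hlt => lt_irrefl c (lt_of_lt_of_le hlt (hc.2 hx hlt.le))⟩
        simp only [Finset.mem_filter, Finset.mem_univ, true_and] at hc
        have hcov : c ⋖ b := by
          refine ⟨hc.2, fun d hcd hdb => ?_⟩
          exact hcmax d (by simp [le_of_lt (lt_of_le_of_lt hc.1 hcd), hdb]) hcd
        have h1 : g c ≤ g b := by
          refine le_trans ?_ (hsup b)
          exact Finset.single_le_sum (fun x _ => hg x)
            (by simp [chSet, hcov])
        exact le_trans (IH c hc.2 a hc.1) h1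
  intro α
  set M : ℝ := ⨆ a : T, f a with hM
  have hbdd : BddAbove (Set.range f) := (Set.finite_range f).bddAbove
  have hfM : ∀ a, f a ≤ M := fun a => le_ciSup hbdd a
  have hM0 : 0 ≤ M := le_trans (hf (Classical.arbitrary T)) (hfM _)
  set S : Finset T := Finset.univ.filter (fun x => α ≤ x ∧ f x ≠ 0) with hS
  have hsumS : treeI f α = ∑ x ∈ S, f x := by
    rw [treeI]
    refine (Finset.sum_subset ?_ ?_).symm
    · intro x hx
      simp only [hS, Finset.mem_filter] at hx ⊢
      exact ⟨hx.1, hx.2.1⟩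
    · intro x hx hx'
      simp only [hS, Finset.mem_filter, Finset.mem_univ, true_and] at hx hx'
      by_contra h
      exact hx' ⟨hx, h⟩
  rcases S.eq_empty_or_nonempty with hSe | hSne
  · rw [hsumS, hSe, Finset.sum_empty, zero_mul]
    by_cases hfz : ∃ a, f a ≠ 0
    · obtain ⟨a, ha⟩ := hfz
      have hδ0 : 0 ≤ δ := le_trans (Finset.sum_nonneg (fun x _ => hg x)) (hδ a ha)
      positivity
    · push_neg at hfz
      have : M = 0 := by
        refine le_antisymm (ciSup_le fun a => by rw [hfz a]) (le_trans (hf _) (hfM (Classical.arbitrary T)))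
      rw [this, mul_zero]
  · obtain ⟨m, hm, hmmin⟩ : ∃ m ∈ S, ∀ x ∈ S, ¬ x < m := by
      obtain ⟨m, hm⟩ := Finset.exists_minimal hSne
      exact ⟨m, hm.1, fun x hx hlt => lt_irrefl m (lt_of_le_of_lt (hm.2 hx hlt.le) hlt)⟩
    simp only [hS, Finset.mem_filter, Finset.mem_univ, true_and] at hm
    have hmle : ∀ x ∈ S, m ≤ x := by
      intro x hx
      have hx' := hx
      simp only [hS, Finset.mem_filter, Finset.mem_univ, true_and] at hx'
      rcases hT.2 α x m hx'.1 hm.1 with h | h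
      · rcases eq_or_lt_of_le h with rfl | hlt
        · exact le_rfl
        · exact absurd hlt (hmmin x hx)
      · exact h
    calc treeI f α * g α = ∑ x ∈ S, f x * g α := by rw [hsumS, Finset.sum_mul]
      _ ≤ ∑ x ∈ S, M * g x := by
          refine Finset.sum_le_sum fun x hx => ?_
          have hx' := hx
          simp only [hS, Finset.mem_filter, Finset.mem_univ, true_and] at hx'
          exact mul_le_mul (hfM x) (gmono x α hx'.1) (hg α) hM0
      _ = M * ∑ x ∈ S, g x := by rw [Finset.mul_sum]
      _ ≤ M * treeI g m := by
          refine mul_le_mul_of_nonneg_left ?_ hM0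
          rw [treeI]
          refine Finset.sum_le_sum_of_subset_of_nonneg ?_ (fun x _ _ => hg x)
          intro x hx
          simp only [Finset.mem_filter, Finset.mem_univ, true_and]
          exact hmle x hx
      _ ≤ M * δ := mul_le_mul_of_nonneg_left (hδ m hm.2) hM0
      _ = δ * M := mul_comm _ _
end

section
/- Let $T$ be a finite rooted tree and $f, g : T \to [0,\infty)$ with $g$ nondecreasing (i.e. $\alpha \leq \beta$ implies $g(\alpha) \leq g(\beta)$). Then $\|If \cdot g\|_{\ell^\infty(T)} \leq \left( \sup_{\mathrm{supp}(g) \cap \mathrm{supp}(f)} II^* g \right) \|f\|_{\ell^\infty(T)}$. -/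
open Finset
open scoped Classical

/-- if `g` is nondecreasing (towards the root), then
`‖If · g‖_∞ ≤ (sup_{supp g ∩ supp f} II*g) ‖f‖_∞`. -/
theorem stmt_4 {T : Type*} [Fintype T] [Nonempty T] [PartialOrder T] (hT : IsRootedTree T)
    (f g : T → ℝ) (hf : ∀ a, 0 ≤ f a) (hg : ∀ a, 0 ≤ g a)
    (hmono : ∀ α β : T, α ≤ β → g α ≤ g β) :
    ∀ α : T, treeI f α * g α ≤
      (⨆ x ∈ {x : T | g x ≠ 0 ∧ f x ≠ 0}, treeI (treeIStar g) x) * ⨆ a : T, f a := by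
  intro α
  set S : Set T := {x : T | g x ≠ 0 ∧ f x ≠ 0} with hS
  set C : ℝ := ⨆ x ∈ S, treeI (treeIStar g) x with hC
  set M : ℝ := ⨆ a : T, f a with hM
  have hvnn : ∀ x : T, 0 ≤ treeI (treeIStar g) x := by
    intro x
    apply Finset.sum_nonneg
    intro i _
    exact Finset.sum_nonneg fun j _ => hg j
  have hCnn : 0 ≤ C := by
    apply Real.iSup_nonneg
    intro x
    exact Real.iSup_nonneg fun _ => hvnn x
  have hMnn : 0 ≤ M := by
    obtain ⟨a⟩ := ‹Nonempty T›
    exact le_trans (hf a) (le_ciSup (Set.Finite.bddAbove (Set.finite_range f)) a)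
  have hfM : ∀ a : T, f a ≤ M :=
    fun a => le_ciSup (Set.Finite.bddAbove (Set.finite_range f)) a
  have hleC : ∀ x : T, x ∈ S → treeI (treeIStar g) x ≤ C := by
    intro x hx
    have h1 : treeI (treeIStar g) x ≤ ⨆ _ : x ∈ S, treeI (treeIStar g) x :=
      le_ciSup (f := fun _ : x ∈ S => treeI (treeIStar g) x)
        (Set.Finite.bddAbove (Set.finite_range _)) hx
    refine h1.trans ?_
    exact le_ciSup (f := fun y : T => ⨆ _ : y ∈ S, treeI (treeIStar g) y)
      (Set.Finite.bddAbove (Set.finite_range _)) x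
  -- main estimate
  have step1 : treeI f α * g α ≤ ∑ α' ∈ Finset.univ.filter (fun α' => α ≤ α'), f α' * g α' := by
    rw [treeI, Finset.sum_mul]
    apply Finset.sum_le_sum
    intro i hi
    simp only [Finset.mem_filter] at hi
    exact mul_le_mul_of_nonneg_left (hmono α i hi.2) (hf i)
  set A : Finset T := Finset.univ.filter (fun α' => α ≤ α' ∧ g α' ≠ 0 ∧ f α' ≠ 0) with hA
  have step2 : ∑ α' ∈ Finset.univ.filter (fun α' => α ≤ α'), f α' * g α'
      = ∑ α' ∈ A, f α' * g α' := by
    apply (Finset.sum_subset ?_ ?_).symm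
    · intro x hx
      simp only [hA, Finset.mem_filter] at hx ⊢
      exact ⟨hx.1, hx.2.1⟩
    · intro x hx hxA
      simp only [hA, Finset.mem_filter, Finset.mem_univ, true_and] at hx hxA
      push_neg at hxA
      rcases ne_or_eq (g x) 0 with hgx | hgx
      · rcases ne_or_eq (f x) 0 with hfx | hfx
        · rw [hxA hx hgx, zero_mul]
        · rw [hfx, zero_mul]
      · rw [hgx, mul_zero]
  rcases Finset.eq_empty_or_nonempty A with hAe | hAne
  · rw [step2, hAe, Finset.sum_empty] at step1
    calc treeI f α * g α ≤ 0 := step1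
      _ ≤ C * M := mul_nonneg hCnn hMnn
  · obtain ⟨x, hxA, hxmin'⟩ := A.exists_minimal hAne
    have hxmin : ∀ y ∈ A, ¬ y < x := fun y hy hlt => hlt.not_ge (hxmin' hy hlt.le)
    simp only [hA, Finset.mem_filter, Finset.mem_univ, true_and] at hxA
    have hxle : ∀ y ∈ A, x ≤ y := by
      intro y hy
      simp only [hA, Finset.mem_filter, Finset.mem_univ, true_and] at hy
      rcases hT.2 α x y hxA.1 hy.1 with h | h
      · exact h
      · have := hxmin y (by simp [hA, hy.1, hy.2.1, hy.2.2])
        rcases lt_or_eq_of_le h with h' | h'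
        · exact absurd h' this
        · exact le_of_eq h'.symm
    have step3 : ∑ α' ∈ A, f α' * g α' ≤ M * ∑ α' ∈ A, g α' := by
      rw [Finset.mul_sum]
      exact Finset.sum_le_sum fun i _ => mul_le_mul_of_nonneg_right (hfM i) (hg i)
    have step4 : ∑ α' ∈ A, g α' ≤ treeI (treeIStar g) x := by
      calc ∑ α' ∈ A, g α' ≤ ∑ α' ∈ Finset.univ.filter (fun α' => x ≤ α'), g α' := by
            apply Finset.sum_le_sum_of_subset_of_nonneg
            · intro y hy
              simp only [Finset.mem_filter, Finset.mem_univ, true_and]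
              exact hxle y hy
            · intro i _ _; exact hg i
        _ ≤ ∑ α' ∈ Finset.univ.filter (fun α' => x ≤ α'), treeIStar g α' := by
            apply Finset.sum_le_sum
            intro i _
            rw [treeIStar]
            exact Finset.single_le_sum (fun j _ => hg j) (by simp)
        _ = treeI (treeIStar g) x := rfl
    have hxS : x ∈ S := ⟨hxA.2.1, hxA.2.2⟩
    calc treeI f α * g α ≤ ∑ α' ∈ A, f α' * g α' := by rw [← step2]; exact step1
      _ ≤ M * ∑ α' ∈ A, g α' := step3
      _ ≤ M * treeI (treeIStar g) x := mul_le_mul_of_nonneg_left step4 hMnn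
      _ ≤ M * C := mul_le_mul_of_nonneg_left (hleC x hxS) hMnn
      _ = C * M := mul_comm M C
end

section
/- For each $1 < p < 2$ and each constant $C > 0$ there exists a finite dyadic tree $T$ and nonnegative functions $f, g$ on $T$ with $g$ superadditive, $Ig \leq 3$ on all of $T$, and $\mathrm{supp}(f) \subseteq \{Ig \leq 3\}$, such that $\|If \cdot g\|_{\ell^p(T)} > C \cdot 3^{(p-1)/p} \cdot 3^{1/p} \|f\|_{\ell^p(T)}$. In particular, the inequality $\|If \cdot g\|_{\ell^p(T)} \leq C\, \delta^{(p-1)/p} \lambda^{1/p} \|f\|_{\ell^p(T)}$ fails for $1 < p < 2$ with a constant independent of the depth of the tree. -/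
open Finset
open scoped Classical

/-- A dyadic (binary) tree: every vertex has either no children or exactly two. -/
def IsDyadic (T : Type*) [Fintype T] [PartialOrder T] : Prop :=
  ∀ β : T, (chSet β).card = 0 ∨ (chSet β).card = 2


namespace Stmt5Aux

/-- Membership condition: length at most `k + 2^k`, and every entry at position `≥ k`
except possibly the last one is `false`. -/
def TCond (k : ℕ) (l : List Bool) : Prop :=
  l.length ≤ k + 2^k ∧ ∀ i : ℕ, k ≤ i → i + 1 < l.length → l[i]? = some false

/-- Spine condition: every entry at position `≥ k` is `false`. -/
def SpineOK (k : ℕ) (l : List Bool) : Prop :=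
  ∀ i : ℕ, k ≤ i → i < l.length → l[i]? = some false

def Tr (k : ℕ) : Type := {l : List Bool // TCond k l}

instance (k : ℕ) : PartialOrder (Tr k) where
  le x y := y.1 <+: x.1
  le_refl x := List.prefix_refl _
  le_trans a b c h1 h2 := List.IsPrefix.trans h2 h1
  le_antisymm a b h1 h2 := Subtype.ext (h2.eq_of_length (le_antisymm h2.length_le h1.length_le))

lemma le_def {k : ℕ} (x y : Tr k) : x ≤ y ↔ y.1 <+: x.1 := Iff.rfl

lemma lt_def {k : ℕ} (x y : Tr k) : x < y ↔ y.1 <+: x.1 ∧ y.1.length < x.1.length := by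
  constructor
  · rintro ⟨h1, h2⟩
    refine ⟨h1, lt_of_le_of_ne h1.length_le fun he => h2 ?_⟩
    show x.1 <+: y.1
    rw [h1.eq_of_length he]
  · rintro ⟨h1, h2⟩
    refine ⟨h1, fun h => ?_⟩
    have h' : x.1 <+: y.1 := h
    have := h'.length_le
    omega

noncomputable instance (k : ℕ) : Fintype (Tr k) := by
  apply Fintype.ofInjective (fun (x : Tr k) (i : Fin (k + 2^k + 1)) => x.1[i.1]?)
  intro x y h
  apply Subtype.ext
  apply List.ext_getElem?
  intro n
  by_cases hn : n < k + 2^k + 1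
  · exact congrFun h ⟨n, hn⟩
  · rw [List.getElem?_eq_none, List.getElem?_eq_none]
    · exact le_trans y.2.1 (by omega)
    · exact le_trans x.2.1 (by omega)

lemma prefix_closed {k : ℕ} {l l' : List Bool} (h : TCond k l) (hp : l' <+: l) :
    TCond k l' := by
  have hple : l'.length ≤ l.length := hp.length_le
  refine ⟨le_trans hple h.1, fun i hki hi => ?_⟩
  rw [List.prefix_iff_eq_take] at hp
  rw [hp, List.getElem?_take, if_pos (by omega)]
  exact h.2 i hki (by omega)

/-- The children of `β` are exactly the one-step extensions. -/
lemma covby_iff {k : ℕ} (x β : Tr k) :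
    x ⋖ β ↔ β.1 <+: x.1 ∧ x.1.length = β.1.length + 1 := by
  constructor
  · rintro ⟨hlt, hmax⟩
    rw [lt_def] at hlt
    refine ⟨hlt.1, ?_⟩
    by_contra hne
    have hlen : β.1.length + 1 < x.1.length := by omega
    set z : Tr k := ⟨x.1.take (β.1.length + 1), prefix_closed x.2 (List.take_prefix _ _)⟩
    have hz1 : x < z := by
      rw [lt_def]
      constructor
      · exact List.take_prefix _ _
      · simp [z, List.length_take]; omega
    have hz2 : z < β := by
      rw [lt_def]
      constructor
      · rw [List.prefix_take_iff]
        exact ⟨hlt.1, by omega⟩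
      · simp [z, List.length_take]; omega
    exact hmax hz1 hz2
  · rintro ⟨h1, h2⟩
    constructor
    · rw [lt_def]; exact ⟨h1, by omega⟩
    · intro z hz1 hz2
      rw [lt_def] at hz1 hz2
      omega

lemma exists_concat {k : ℕ} {x β : Tr k} (h1 : β.1 <+: x.1)
    (h2 : x.1.length = β.1.length + 1) : ∃ b : Bool, x.1 = β.1 ++ [b] := by
  obtain ⟨t, ht⟩ := h1
  have : t.length = 1 := by
    have := congrArg List.length ht
    simp at this; omega
  obtain ⟨b, rfl⟩ := List.length_eq_one_iff.mp this
  exact ⟨b, ht.symm⟩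

/-- Characterization of when a one-step extension is in the tree. -/
lemma concat_tcond_iff {k : ℕ} (l : List Bool) (b : Bool) :
    TCond k (l ++ [b]) ↔ l.length + 1 ≤ k + 2^k ∧ SpineOK k l := by
  constructor
  · rintro ⟨hlen, h⟩
    refine ⟨by simpa using hlen, fun i hki hi => ?_⟩
    have := h i hki (by simp; omega)
    rwa [List.getElem?_append, if_pos hi] at this
  · rintro ⟨hlen, h⟩
    refine ⟨by simpa using hlen, fun i hki hi => ?_⟩
    simp only [List.length_append, List.length_cons, List.length_nil] at hi
    rw [List.getElem?_append, if_pos (by omega)]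
    exact h i hki (by omega)

section defs

variable (k : ℕ)

noncomputable def gfun : Tr k → ℝ :=
  fun x => if SpineOK k x.1 then ((2:ℝ) ^ (min x.1.length k))⁻¹ else 0

def root : Tr k := ⟨[], by constructor <;> simp⟩

noncomputable def ffun : Tr k → ℝ := fun x => if x = root k then 1 else 0

end defs

lemma gfun_nonneg (k : ℕ) (x : Tr k) : 0 ≤ gfun k x := by
  unfold gfun; split <;> positivity

lemma ffun_nonneg (k : ℕ) (x : Tr k) : 0 ≤ ffun k x := by
  unfold ffun; split <;> norm_num

lemma chSet_of_leaf {k : ℕ} (β : Tr k)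
    (h : ¬ (β.1.length + 1 ≤ k + 2^k ∧ SpineOK k β.1)) : chSet β = ∅ := by
  ext x
  simp only [chSet, Finset.mem_filter, Finset.mem_univ, true_and, Finset.notMem_empty,
    iff_false]
  intro hx
  rw [covby_iff] at hx
  obtain ⟨b, hb⟩ := exists_concat hx.1 hx.2
  have := x.2
  rw [hb, concat_tcond_iff] at this
  exact h this

lemma chSet_of_node {k : ℕ} (β : Tr k)
    (h : β.1.length + 1 ≤ k + 2^k ∧ SpineOK k β.1) :
    chSet β = Insert.insert (α := Tr k) ⟨β.1 ++ [false], (concat_tcond_iff _ _).mpr h⟩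
               (Singleton.singleton (α := Tr k) ⟨β.1 ++ [true], (concat_tcond_iff _ _).mpr h⟩) := by
  ext x
  simp only [chSet, Finset.mem_filter, Finset.mem_univ, true_and, Finset.mem_insert,
    Finset.mem_singleton]
  refine Iff.trans ?_ (Finset.mem_insert.trans (or_congr_right Finset.mem_singleton)).symm
  rw [covby_iff]
  constructor
  · rintro ⟨h1, h2⟩
    obtain ⟨b, hb⟩ := exists_concat h1 h2
    cases b
    · left; exact Subtype.ext hb
    · right; exact Subtype.ext hb
  · rintro (rfl | rfl) <;> simp [List.prefix_append]

lemma children_ne {k : ℕ} (β : Tr k) (h) (h') :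
    (⟨β.1 ++ [false], h⟩ : Tr k) ≠ ⟨β.1 ++ [true], h'⟩ := by
  intro hc
  have := congrArg Subtype.val hc
  simp at this

lemma isDyadic (k : ℕ) : IsDyadic (Tr k) := by
  intro β
  by_cases h : β.1.length + 1 ≤ k + 2^k ∧ SpineOK k β.1
  · right
    rw [chSet_of_node β h]
    exact Finset.card_pair (children_ne β _ _)
  · left
    rw [chSet_of_leaf β h]
    simp

lemma isRootedTree (k : ℕ) : IsRootedTree (Tr k) := by
  constructor
  · exact ⟨root k, fun a => List.nil_prefix⟩
  · intro a b c h1 h2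
    rw [le_def] at h1 h2
    rcases List.prefix_or_prefix_of_prefix h1 h2 with h | h
    · right; exact h
    · left; exact h

lemma spineOK_concat_false {k : ℕ} {l : List Bool} (h : SpineOK k l) :
    SpineOK k (l ++ [false]) := by
  intro i hki hi
  simp only [List.length_append, List.length_cons, List.length_nil] at hi
  rw [List.getElem?_append]
  split
  · exact h i hki (by omega)
  · have : i = l.length := by omega
    subst this
    simp

lemma spineOK_concat_true {k : ℕ} {l : List Bool} (hlen : l.length < k) :
    SpineOK k (l ++ [true]) := by
  intro i hki hi
  simp only [List.length_append, List.length_cons, List.length_nil] at hi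
  omega

lemma not_spineOK_concat_true {k : ℕ} {l : List Bool} (hlen : k ≤ l.length) :
    ¬ SpineOK k (l ++ [true]) := by
  intro h
  have := h l.length hlen (by simp)
  rw [List.getElem?_concat_length] at this
  simp at this

lemma superadditive (k : ℕ) : Superadditive (gfun k) := by
  intro β
  by_cases h : β.1.length + 1 ≤ k + 2^k ∧ SpineOK k β.1
  · rw [chSet_of_node β h]
    rw [show (∑ β' ∈ (Insert.insert (α := Tr k) ⟨β.1 ++ [false], (concat_tcond_iff _ _).mpr h⟩
               (Singleton.singleton (α := Tr k) ⟨β.1 ++ [true], (concat_tcond_iff _ _).mpr h⟩) : Finset (Tr k)), gfun k β')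
        = gfun k ⟨β.1 ++ [false], (concat_tcond_iff _ _).mpr h⟩
          + gfun k ⟨β.1 ++ [true], (concat_tcond_iff _ _).mpr h⟩ from
      Finset.sum_pair (children_ne β _ _)]
    have hgβ : gfun k β = ((2:ℝ) ^ (min β.1.length k))⁻¹ := if_pos h.2
    have hgf : gfun k ⟨β.1 ++ [false], (concat_tcond_iff _ _).mpr h⟩
        = ((2:ℝ) ^ (min (β.1.length + 1) k))⁻¹ := by
      unfold gfun
      rw [if_pos (spineOK_concat_false h.2)]
      simp
    by_cases hlk : β.1.length < k
    · have hgt : gfun k ⟨β.1 ++ [true], (concat_tcond_iff _ _).mpr h⟩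
          = ((2:ℝ) ^ (min (β.1.length + 1) k))⁻¹ := by
        unfold gfun
        rw [if_pos (spineOK_concat_true hlk)]
        simp
      rw [hgβ, hgf, hgt, min_eq_left (by omega), min_eq_left (by omega), pow_succ]
      rw [mul_inv]
      ring_nf
      norm_num
    · have hgt : gfun k ⟨β.1 ++ [true], (concat_tcond_iff _ _).mpr h⟩ = 0 := by
        unfold gfun
        rw [if_neg (not_spineOK_concat_true (by omega))]
      rw [hgβ, hgf, hgt, min_eq_right (by omega), min_eq_right (by omega), add_zero]
  · rw [chSet_of_leaf β h, Finset.sum_empty]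
    exact gfun_nonneg k β

/-- `treeI` as a sum over the prefixes. -/
lemma treeI_eq (k : ℕ) (h : Tr k → ℝ) (x : Tr k) :
    treeI h x = ∑ i ∈ Finset.range (x.1.length + 1),
      h ⟨x.1.take i, prefix_closed x.2 (List.take_prefix _ _)⟩ := by
  unfold treeI
  apply Finset.sum_nbij' (i := fun (α' : Tr k) => α'.1.length)
    (j := fun i => ⟨x.1.take i, prefix_closed x.2 (List.take_prefix _ _)⟩)
  · intro a ha
    simp only [Finset.mem_filter, Finset.mem_univ, true_and] at ha
    rw [le_def] at ha
    have := ha.length_le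
    simp only [Finset.mem_range]
    omega
  · intro a _
    refine Finset.mem_filter.mpr ⟨Finset.mem_univ _, ?_⟩
    refine (le_def _ _).mpr ?_
    exact List.take_prefix _ _
  · intro a ha
    simp only [Finset.mem_filter, Finset.mem_univ, true_and] at ha
    rw [le_def, List.prefix_iff_eq_take] at ha
    exact Subtype.ext ha.symm
  · intro i hi
    simp only [Finset.mem_range] at hi
    simp [List.length_take]
    omega
  · intro a ha
    simp only [Finset.mem_filter, Finset.mem_univ, true_and] at ha
    rw [le_def, List.prefix_iff_eq_take] at ha
    congr 1
    exact Subtype.ext ha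

lemma treeI_ffun (k : ℕ) (x : Tr k) : treeI (ffun k) x = 1 := by
  unfold treeI ffun
  rw [Finset.sum_ite_eq' _ (root k) (fun _ => (1:ℝ))]
  rw [if_pos]
  simp only [Finset.mem_filter, Finset.mem_univ, true_and]
  rw [le_def]
  exact List.nil_prefix

lemma treeI_gfun_le (k : ℕ) (x : Tr k) : treeI (gfun k) x ≤ 3 := by
  rw [treeI_eq]
  have step1 : ∑ i ∈ Finset.range (x.1.length + 1),
      gfun k ⟨x.1.take i, prefix_closed x.2 (List.take_prefix _ _)⟩
      ≤ ∑ i ∈ Finset.range (x.1.length + 1), ((2:ℝ) ^ (min i k))⁻¹ := by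
    apply Finset.sum_le_sum
    intro i hi
    simp only [Finset.mem_range] at hi
    unfold gfun
    split
    · rw [List.length_take, min_eq_left (show i ≤ x.1.length by omega)]
    · positivity
  have step2 : ∑ i ∈ Finset.range (x.1.length + 1), ((2:ℝ) ^ (min i k))⁻¹
      ≤ ∑ i ∈ Finset.range (k + 2^k + 1), ((2:ℝ) ^ (min i k))⁻¹ := by
    apply Finset.sum_le_sum_of_subset_of_nonneg
    · apply Finset.range_subset_range.mpr
      have := x.2.1
      omega
    · intro i _ _
      positivity
  have step3 : ∑ i ∈ Finset.range (k + 2^k + 1), ((2:ℝ) ^ (min i k))⁻¹ ≤ 3 := by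
    have hre : k + 2^k + 1 = (k + 1) + 2^k := by omega
    rw [hre, Finset.sum_range_add]
    have h1 : ∑ i ∈ Finset.range (k+1), ((2:ℝ) ^ (min i k))⁻¹
        = ∑ i ∈ Finset.range (k+1), ((1:ℝ)/2) ^ i := by
      apply Finset.sum_congr rfl
      intro i hi
      simp only [Finset.mem_range] at hi
      rw [min_eq_left (by omega)]
      rw [one_div, inv_pow]
    have h2 : ∑ i ∈ Finset.range (2^k), ((2:ℝ) ^ (min (k + 1 + i) k))⁻¹
        = (2^k : ℕ) * ((2:ℝ)^k)⁻¹ := by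
      rw [Finset.sum_congr rfl (fun i _ => by rw [min_eq_right (by omega)])]
      rw [Finset.sum_const, nsmul_eq_mul, Finset.card_range]
    rw [h1, h2]
    have h3 : ∑ i ∈ Finset.range (k+1), ((1:ℝ)/2) ^ i ≤ 2 := sum_geometric_two_le _
    have h4 : ((2^k : ℕ) : ℝ) * ((2:ℝ)^k)⁻¹ = 1 := by
      rw [Nat.cast_pow, Nat.cast_ofNat]
      field_simp
    rw [h4]
    linarith
  linarith [step1, step2, step3]

/-- The injection parameterizing the spine vertices below level `k`. -/
noncomputable def ψ (k : ℕ) (wm : (Fin k → Bool) × Fin (2^k)) : Tr k :=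
  ⟨List.ofFn wm.1 ++ List.replicate (wm.2.1 + 1) false, by
    constructor
    · simp [List.length_replicate]
    · intro i hki hi
      simp only [List.length_append, List.length_ofFn, List.length_replicate] at hi
      rw [List.getElem?_append, if_neg (by simp; omega), List.getElem?_replicate,
        if_pos (by simp; omega)]⟩

lemma ψ_spine (k : ℕ) (wm : (Fin k → Bool) × Fin (2^k)) : SpineOK k (ψ k wm).1 := by
  intro i hki hi
  simp only [ψ, List.length_append, List.length_ofFn, List.length_replicate] at hi
  simp only [ψ]
  rw [List.getElem?_append, if_neg (by simp; omega), List.getElem?_replicate,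
    if_pos (by simp; omega)]

lemma ψ_len (k : ℕ) (wm : (Fin k → Bool) × Fin (2^k)) :
    (ψ k wm).1.length = k + wm.2.1 + 1 := by
  simp [ψ]
  omega

lemma gfun_ψ (k : ℕ) (wm : (Fin k → Bool) × Fin (2^k)) :
    gfun k (ψ k wm) = ((2:ℝ)^k)⁻¹ := by
  unfold gfun
  rw [if_pos (ψ_spine k wm), ψ_len, min_eq_right (by omega)]

lemma ψ_inj (k : ℕ) : Function.Injective (ψ k) := by
  intro a b h
  have hval := congrArg Subtype.val h
  simp only [ψ] at hval
  have hlen := congrArg List.length hval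
  simp only [List.length_append, List.length_ofFn, List.length_replicate] at hlen
  have hm : a.2 = b.2 := Fin.ext (by omega)
  have := (List.append_inj hval (by simp)).1
  have hw : a.1 = b.1 := List.ofFn_injective this
  exact Prod.ext hw hm

end Stmt5Aux

/-- for each `1 < p < 2` and each `C > 0` there is a finite dyadic tree and
nonnegative `f, g` with `g` superadditive, `Ig ≤ 3` on the tree and `supp f ⊆ {Ig ≤ 3}`,
such that `‖If·g‖_p > C · 3^{(p-1)/p} · 3^{1/p} · ‖f‖_p`. -/
theorem stmt_5 (p : ℝ) (hp1 : 1 < p) (hp2 : p < 2) (C : ℝ) (hC : 0 < C) :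
    ∃ (T : Type) (i1 : Fintype T) (i2 : PartialOrder T),
      letI := i1; letI := i2;
      IsRootedTree T ∧ IsDyadic T ∧
      ∃ f g : T → ℝ,
        (∀ a, 0 ≤ f a) ∧ (∀ a, 0 ≤ g a) ∧ Superadditive g ∧
        (∀ α : T, treeI g α ≤ 3) ∧
        (∀ α : T, f α ≠ 0 → treeI g α ≤ 3) ∧
        C * (3 : ℝ) ^ ((p - 1) / p) * (3 : ℝ) ^ (1 / p) * (∑ α : T, f α ^ p) ^ (1 / p) <
          (∑ α : T, (treeI f α * g α) ^ p) ^ (1 / p) := by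
  classical
  have hp0 : (0:ℝ) < p := by linarith
  have h3C : (0:ℝ) < 3 * C := by linarith
  obtain ⟨k, hk⟩ : ∃ k : ℕ, (3*C)^p < (2:ℝ) ^ ((k:ℝ) * (2 - p)) := by
    have hb : (1:ℝ) < (2:ℝ) ^ (2 - p) := by
      exact (Real.one_lt_rpow_iff_of_pos (by norm_num)).mpr (Or.inl ⟨by norm_num, by linarith⟩)
    obtain ⟨n, hn⟩ := pow_unbounded_of_one_lt ((3*C)^p) hb
    refine ⟨n, lt_of_lt_of_eq hn ?_⟩
    rw [← Real.rpow_natCast ((2:ℝ)^(2-p)) n, ← Real.rpow_mul (by norm_num),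
      mul_comm (2-p) ((n:ℝ))]
  refine ⟨Stmt5Aux.Tr k, inferInstance, inferInstance, Stmt5Aux.isRootedTree k, Stmt5Aux.isDyadic k,
    Stmt5Aux.ffun k, Stmt5Aux.gfun k, Stmt5Aux.ffun_nonneg k, Stmt5Aux.gfun_nonneg k,
    Stmt5Aux.superadditive k, Stmt5Aux.treeI_gfun_le k, fun α _ => Stmt5Aux.treeI_gfun_le k α, ?_⟩
  have hfp : ∑ α : Stmt5Aux.Tr k, Stmt5Aux.ffun k α ^ p = 1 := by
    have he : ∀ α : Stmt5Aux.Tr k, Stmt5Aux.ffun k α ^ p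
        = if α = Stmt5Aux.root k then 1 else 0 := by
      intro α
      unfold Stmt5Aux.ffun
      split_ifs
      · exact Real.one_rpow p
      · exact Real.zero_rpow (ne_of_gt hp0)
    rw [Finset.sum_congr rfl (fun α _ => he α), Finset.sum_ite_eq' _ _ (fun _ => (1:ℝ)),
      if_pos (Finset.mem_univ _)]
  have hgp : ∑ α : Stmt5Aux.Tr k, (treeI (Stmt5Aux.ffun k) α * Stmt5Aux.gfun k α) ^ p
      = ∑ α : Stmt5Aux.Tr k, (Stmt5Aux.gfun k α) ^ p := by
    apply Finset.sum_congr rfl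
    intro α _
    rw [Stmt5Aux.treeI_ffun, one_mul]
  have hlow : (2:ℝ) ^ ((k:ℝ) * (2 - p)) ≤ ∑ α : Stmt5Aux.Tr k, (Stmt5Aux.gfun k α) ^ p := by
    have h1 : ∑ α ∈ Finset.image (Stmt5Aux.ψ k) Finset.univ, (Stmt5Aux.gfun k α) ^ p
        ≤ ∑ α : Stmt5Aux.Tr k, (Stmt5Aux.gfun k α) ^ p := by
      apply Finset.sum_le_sum_of_subset_of_nonneg (Finset.subset_univ _)
      intro α _ _
      exact Real.rpow_nonneg (Stmt5Aux.gfun_nonneg k α) p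
    have h2 : ∑ α ∈ Finset.image (Stmt5Aux.ψ k) Finset.univ, (Stmt5Aux.gfun k α) ^ p
        = ∑ wm : (Fin k → Bool) × Fin (2^k), (Stmt5Aux.gfun k (Stmt5Aux.ψ k wm)) ^ p := by
      apply Finset.sum_image
      intro x _ y _ hxy
      exact Stmt5Aux.ψ_inj k hxy
    have h3 : ∑ wm : (Fin k → Bool) × Fin (2^k), (Stmt5Aux.gfun k (Stmt5Aux.ψ k wm)) ^ p
        = (Fintype.card ((Fin k → Bool) × Fin (2^k)) : ℝ) * (((2:ℝ)^k)⁻¹) ^ p := by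
      rw [Finset.sum_congr rfl (fun wm _ => by rw [Stmt5Aux.gfun_ψ]), Finset.sum_const,
        nsmul_eq_mul, Finset.card_univ]
    have hcard : (Fintype.card ((Fin k → Bool) × Fin (2^k)) : ℝ)
        = (2:ℝ)^(k:ℝ) * (2:ℝ)^(k:ℝ) := by
      have hc : Fintype.card ((Fin k → Bool) × Fin (2^k)) = 2^k * 2^k := by simp
      rw [hc]
      push_cast
      rw [Real.rpow_natCast]
    have hpow : (((2:ℝ)^k)⁻¹) ^ p = (2:ℝ) ^ ((-(k:ℝ)) * p) := by
      rw [Real.rpow_mul (by norm_num : (0:ℝ) ≤ 2), Real.rpow_neg (by norm_num : (0:ℝ) ≤ 2),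
        Real.rpow_natCast]
    have heq : (2:ℝ)^(k:ℝ) * (2:ℝ)^(k:ℝ) * (2:ℝ)^((-(k:ℝ))*p) = (2:ℝ)^((k:ℝ)*(2-p)) := by
      rw [← Real.rpow_add (by norm_num : (0:ℝ) < 2), ← Real.rpow_add (by norm_num : (0:ℝ) < 2)]
      congr 1
      ring
    calc (2:ℝ) ^ ((k:ℝ) * (2 - p))
        = (Fintype.card ((Fin k → Bool) × Fin (2^k)) : ℝ) * (((2:ℝ)^k)⁻¹) ^ p := by
          rw [hcard, hpow, heq]
      _ = ∑ α ∈ Finset.image (Stmt5Aux.ψ k) Finset.univ, (Stmt5Aux.gfun k α) ^ p := by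
          rw [h2, h3]
      _ ≤ _ := h1
  have hfin : (3*C)^p < ∑ α : Stmt5Aux.Tr k, (Stmt5Aux.gfun k α) ^ p := lt_of_lt_of_le hk hlow
  have hcc : C * (3:ℝ) ^ ((p - 1) / p) * (3:ℝ) ^ (1 / p) = 3 * C := by
    rw [mul_assoc, ← Real.rpow_add (by norm_num : (0:ℝ) < 3)]
    have hone : (p-1)/p + 1/p = 1 := by field_simp; ring
    rw [hone, Real.rpow_one]
    ring
  rw [hfp, hgp, Real.one_rpow, mul_one, hcc]
  have hmain := Real.rpow_lt_rpow (le_of_lt (Real.rpow_pos_of_pos h3C p)) hfin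
    (by positivity : (0:ℝ) < 1/p)
  have hid : ((3*C)^p)^(1/p) = 3*C := by
    rw [← Real.rpow_mul h3C.le, mul_one_div_cancel (ne_of_gt hp0), Real.rpow_one]
  rwa [hid] at hmain
end

section
/- Let $p \geq 2$ with H\"older conjugate $q$, let $m$ be a nonnegative measure (function) on the product of two finite trees $T_x \times T_y$, fix $\beta \in T_y$, and define $g(\gamma) := \sum_{\beta' \geq \beta} m(\gamma \times \beta')^{q-1}$ for $\gamma \in T_x$. Then $g^{p-1}$ is superadditive on $T_x$: for every $\gamma$ with children $\gamma_1, \gamma_2$, $g(\gamma_1)^{p-1} + g(\gamma_2)^{p-1} \leq g(\gamma)^{p-1}$. -/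
open Finset
open scoped Classical

/-- Minkowski's inequality for a finite family of nonnegative functions. -/
theorem mink_family {ι J : Type*} (r : ℝ) (hr : 1 ≤ r) (s : Finset ι) (t : Finset J)
    (f : ι → J → ℝ) (hf : ∀ i j, 0 ≤ f i j) :
    (∑ j ∈ t, (∑ i ∈ s, f i j) ^ r) ^ (1 / r) ≤
      ∑ i ∈ s, (∑ j ∈ t, f i j ^ r) ^ (1 / r) := by
  have hr0 : r ≠ 0 := by linarith
  induction s using Finset.induction with
  | empty =>
      simp [Real.zero_rpow hr0, Real.zero_rpow (inv_ne_zero hr0)]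
  | @insert a s' hx ih =>
      simp only [Finset.sum_insert hx]
      calc (∑ j ∈ t, (f a j + ∑ i ∈ s', f i j) ^ r) ^ (1 / r)
          ≤ (∑ j ∈ t, f a j ^ r) ^ (1 / r) + (∑ j ∈ t, (∑ i ∈ s', f i j) ^ r) ^ (1 / r) := by
            refine Real.Lp_add_le_of_nonneg (s := t) (f := fun j => f a j) (g := fun j => ∑ i ∈ s', f i j) hr (fun j _ => hf a j) (fun j _ => ?_)
            exact Finset.sum_nonneg fun i _ => hf i j
        _ ≤ (∑ j ∈ t, f a j ^ r) ^ (1 / r) + ∑ i ∈ s', (∑ j ∈ t, f i j ^ r) ^ (1 / r) := by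
            gcongr
  
/-- let `p ≥ 2`, `q` its Hölder conjugate, `M : T_x × T_y → [0,∞)` a measure
(additive in the first variable: the sum of `M(· , β')` over the children of `γ` is at most
`M(γ, β')`).  For fixed `β`, the function `g(γ) = ∑_{β' ≥ β} M(γ, β')^{q-1}` of special form
has `g^{p-1}` superadditive. -/
theorem stmt_12 {Tx Ty : Type*} [Fintype Tx] [PartialOrder Tx] [Fintype Ty] [PartialOrder Ty]
    (hTx : IsRootedTree Tx) (hTy : IsRootedTree Ty)
    (p q : ℝ) (hp : 2 ≤ p) (hq : 1 / p + 1 / q = 1)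
    (M : Tx → Ty → ℝ) (hM : ∀ γ β', 0 ≤ M γ β')
    (hadd : ∀ (γ : Tx) (β' : Ty), ∑ γ' ∈ chSet γ, M γ' β' ≤ M γ β')
    (β : Ty) (g : Tx → ℝ)
    (hgdef : g = fun γ => ∑ β' ∈ Finset.univ.filter (fun β' => β ≤ β'), M γ β' ^ (q - 1)) :
    ∀ γ : Tx, ∑ γ' ∈ chSet γ, g γ' ^ (p - 1) ≤ g γ ^ (p - 1) := by
  intro γ
  set r : ℝ := p - 1 with hrdef
  have hr : 1 ≤ r := by simp [hrdef]; linarith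
  have hr0 : r ≠ 0 := by linarith
  have hp0 : p ≠ 0 := by positivity
  have hq0 : q ≠ 0 := by
    intro h
    rw [h] at hq
    simp at hq
    rw [hq] at hp; linarith
  have hqr : q - 1 = 1 / r := by
    have : 1 / q = 1 - 1 / p := by linarith
    field_simp at this ⊢
    nlinarith [this]
  set t : Finset Ty := Finset.univ.filter (fun β' => β ≤ β') with ht
  have hg : ∀ γ', g γ' = ∑ β' ∈ t, M γ' β' ^ (q - 1) := by
    intro γ'; rw [hgdef]
  have hgnn : ∀ γ', 0 ≤ g γ' := by
    intro γ'
    rw [hg]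
    exact Finset.sum_nonneg fun β' _ => Real.rpow_nonneg (hM _ _) _
  have key : (∑ γ' ∈ chSet γ, g γ' ^ r) ^ (1 / r) ≤ g γ := by
    calc (∑ γ' ∈ chSet γ, g γ' ^ r) ^ (1 / r)
        = (∑ γ' ∈ chSet γ, (∑ β' ∈ t, M γ' β' ^ (q - 1)) ^ r) ^ (1 / r) := by
          simp only [hg]
      _ ≤ ∑ β' ∈ t, (∑ γ' ∈ chSet γ, (M γ' β' ^ (q - 1)) ^ r) ^ (1 / r) := by
          exact mink_family r hr t (chSet γ) (fun β' γ' => M γ' β' ^ (q - 1))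
            (fun β' γ' => Real.rpow_nonneg (hM _ _) _)
      _ = ∑ β' ∈ t, (∑ γ' ∈ chSet γ, M γ' β') ^ (1 / r) := by
          refine Finset.sum_congr rfl fun β' _ => ?_
          congr 1
          refine Finset.sum_congr rfl fun γ' _ => ?_
          rw [← Real.rpow_mul (hM _ _), hqr, one_div_mul_cancel hr0, Real.rpow_one]
      _ ≤ ∑ β' ∈ t, (M γ β') ^ (1 / r) := by
          refine Finset.sum_le_sum fun β' _ => ?_
          refine Real.rpow_le_rpow ?_ (hadd γ β') (by positivity)
          exact Finset.sum_nonneg fun γ' _ => hM _ _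
      _ = g γ := by
          rw [hg]
          exact Finset.sum_congr rfl fun β' _ => by rw [hqr]
  have hA : 0 ≤ ∑ γ' ∈ chSet γ, g γ' ^ r :=
    Finset.sum_nonneg fun γ' _ => Real.rpow_nonneg (hgnn _) _
  calc ∑ γ' ∈ chSet γ, g γ' ^ r
      = ((∑ γ' ∈ chSet γ, g γ' ^ r) ^ (1 / r)) ^ r := by
        rw [one_div, Real.rpow_inv_rpow hA hr0]
    _ ≤ g γ ^ r := Real.rpow_le_rpow (Real.rpow_nonneg hA _) key (by linarith)
end

section
/- Let $p > 2$. For every constant $C > 0$ there exist a finite dyadic tree $T$ of some depth $N$ and nonnegative functions $f, g$ on $T$, with $g$ superadditive and with $\sup_T II^* g$ attained at a boundary (leaf) vertex in $\mathrm{supp}(g)$, such that $\sum_T (If)^p g > C \left( \sup_{\mathrm{supp} g \cap \mathrm{supp} f} II^* g \right) \sum_T f^p$. Hence the $L^p$ analogue of the positive-kernel lemma, $\sum_T (If)^p g \leq (\sup II^* g \cdot I) \sum_T f^p$, fails for $p > 2$ even for superadditive $g$. -/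
open Finset
open scoped Classical

namespace Stmt14Aux

structure Tr (N : ℕ) where
  val : List Bool
  len_le : val.length ≤ N

variable {N : ℕ}

theorem Tr.ext' {a b : Tr N} (h : a.val = b.val) : a = b := by
  cases a; cases b; simpa using h

instance : PartialOrder (Tr N) where
  le a b := b.val <+: a.val
  le_refl a := List.prefix_refl _
  le_trans a b c h1 h2 := List.IsPrefix.trans h2 h1
  le_antisymm a b h1 h2 :=
    Tr.ext' (List.IsPrefix.eq_of_length h2
      (le_antisymm (List.IsPrefix.length_le h2) (List.IsPrefix.length_le h1)))

theorem le_def {a b : Tr N} : a ≤ b ↔ b.val <+: a.val := ⟨fun h => h, fun h => h⟩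

noncomputable instance : Fintype (Tr N) := Fintype.ofInjective
  (fun a => (fun i : Fin (N+1) => a.val[(i:ℕ)]?)) (by
    intro a b h
    apply Tr.ext'
    apply List.ext_getElem?
    intro n
    by_cases hn : n < N + 1
    · exact congrFun h ⟨n, hn⟩
    · rw [List.getElem?_eq_none (le_trans a.len_le (by omega)),
          List.getElem?_eq_none (le_trans b.len_le (by omega))])

def onP (a : Tr N) : Prop := a.val = List.replicate a.val.length false

def pv (N k : ℕ) (h : k ≤ N) : Tr N := ⟨List.replicate k false, by simpa using h⟩

theorem onP_pv (k : ℕ) (h : k ≤ N) : onP (pv N k h) := by simp [onP, pv]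

theorem len_pv (k : ℕ) (h : k ≤ N) : (pv N k h).val.length = k := by simp [pv]

theorem onP_of_prefix {a b : Tr N} (hab : b.val <+: a.val) (ha : onP a) : onP b := by
  rw [onP, List.eq_replicate_iff]
  refine ⟨rfl, fun x hx => ?_⟩
  have hmem := hab.subset hx
  rw [ha] at hmem
  exact List.eq_of_mem_replicate hmem

theorem replicate_prefix {j k : ℕ} (h : j ≤ k) :
    List.replicate j false <+: List.replicate k false :=
  ⟨List.replicate (k - j) false, by rw [← List.replicate_add]; congr 1; omega⟩

noncomputable def upSet (α : Tr N) : Finset (Tr N) := Finset.univ.filter (fun β => α ≤ β)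

theorem mem_upSet {α β : Tr N} : β ∈ upSet α ↔ β.val <+: α.val := by
  simp [upSet, le_def]

theorem card_upSet (α : Tr N) : (upSet α).card = α.val.length + 1 := by
  rw [show α.val.length + 1 = (Finset.range (α.val.length + 1)).card by simp]
  refine Finset.card_bij' (fun β _ => β.val.length)
    (fun k _ => (⟨α.val.take k, by
      rw [List.length_take]; exact le_trans (min_le_right _ _) α.len_le⟩ : Tr N)) ?_ ?_ ?_ ?_
  · intro β hβ
    rw [Finset.mem_range]
    exact Nat.lt_succ_of_le (mem_upSet.1 hβ).length_le
  · intro k _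
    exact mem_upSet.2 (List.take_prefix _ _)
  · intro β hβ
    exact Tr.ext' (List.prefix_iff_eq_take.1 (mem_upSet.1 hβ)).symm
  · intro k hk
    rw [Finset.mem_range] at hk
    show (α.val.take k).length = k
    rw [List.length_take]
    omega

noncomputable def ff (N : ℕ) : Tr N → ℝ := fun a => if onP a then 1 else 0

theorem ff_nonneg (a : Tr N) : 0 ≤ ff N a := by unfold ff; split <;> norm_num

theorem treeI_ff {α : Tr N} (hα : onP α) : treeI (ff N) α = ((α.val.length + 1 : ℕ) : ℝ) := by
  have h : ∀ β ∈ upSet α, ff N β = 1 := by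
    intro β hβ
    unfold ff
    exact if_pos (onP_of_prefix (mem_upSet.1 hβ) hα)
  show ∑ β ∈ upSet α, ff N β = _
  rw [Finset.sum_congr rfl h, Finset.sum_const, nsmul_eq_mul, mul_one, card_upSet]

theorem treeIStar_ff (β : Tr N) :
    treeIStar (ff N) β = if onP β then ((N + 1 - β.val.length : ℕ) : ℝ) else 0 := by
  have hs : treeIStar (ff N) β
      = (((Finset.univ.filter (fun γ : Tr N => γ ≤ β)).filter onP).card : ℝ) := by
    show (∑ γ ∈ Finset.univ.filter (fun γ : Tr N => γ ≤ β), if onP γ then (1:ℝ) else 0) = _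
    rw [Finset.sum_boole]
  rw [hs]
  by_cases h : onP β
  · rw [if_pos h]
    norm_cast
    rw [← Nat.card_Ico β.val.length (N+1)]
    refine Finset.card_bij' (fun γ _ => γ.val.length)
      (fun k _ => pv N (min k N) (min_le_right k N)) ?_ ?_ ?_ ?_
    · intro γ hγ
      simp only [Finset.mem_filter, Finset.mem_univ, true_and] at hγ
      rw [Finset.mem_Ico]
      exact ⟨(le_def.1 hγ.1).length_le, Nat.lt_succ_of_le γ.len_le⟩
    · intro k hk
      rw [Finset.mem_Ico] at hk
      have hkN : k ≤ N := by omega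
      simp only [Finset.mem_filter, Finset.mem_univ, true_and]
      refine ⟨?_, onP_pv _ _⟩
      rw [le_def]
      show β.val <+: (List.replicate (min k N) false)
      rw [min_eq_left hkN]
      calc β.val = List.replicate β.val.length false := h
        _ <+: List.replicate k false := replicate_prefix hk.1
    · intro γ hγ
      simp only [Finset.mem_filter, Finset.mem_univ, true_and] at hγ
      apply Tr.ext'
      show List.replicate (min γ.val.length N) false = γ.val
      rw [min_eq_left γ.len_le]
      exact hγ.2.symm
    · intro k hk
      rw [Finset.mem_Ico] at hk
      show (List.replicate (min k N) false).length = k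
      rw [List.length_replicate]
      omega
  · rw [if_neg h]
    norm_cast
    rw [Finset.card_eq_zero, Finset.eq_empty_iff_forall_notMem]
    intro γ hγ
    simp only [Finset.mem_filter, Finset.mem_univ, true_and] at hγ
    exact h (onP_of_prefix (le_def.1 hγ.1) hγ.2)

theorem Phi_eq (α : Tr N) : treeI (treeIStar (ff N)) α
    = ∑ β ∈ (upSet α).filter onP, ((N + 1 - β.val.length : ℕ) : ℝ) := by
  rw [Finset.sum_filter]
  show ∑ β ∈ upSet α, treeIStar (ff N) β = _
  exact Finset.sum_congr rfl (fun β _ => treeIStar_ff β)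

noncomputable def om (N : ℕ) : Tr N := pv N N le_rfl

theorem Phi_le (α : Tr N) :
    treeI (treeIStar (ff N)) α ≤ treeI (treeIStar (ff N)) (om N) := by
  rw [Phi_eq, Phi_eq]
  apply Finset.sum_le_sum_of_subset_of_nonneg
  · intro β hβ
    rw [Finset.mem_filter] at hβ ⊢
    refine ⟨?_, hβ.2⟩
    rw [mem_upSet]
    show β.val <+: (pv N N le_rfl).val
    calc β.val = List.replicate β.val.length false := hβ.2
      _ <+: List.replicate N false := replicate_prefix β.len_le
      _ = (pv N N le_rfl).val := rfl
  · intro β _ _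
    positivity

theorem Phi_bound (α : Tr N) :
    treeI (treeIStar (ff N)) α ≤ ((N + 1 : ℕ) : ℝ) * ((N + 1 : ℕ) : ℝ) := by
  rw [Phi_eq]
  calc ∑ β ∈ (upSet α).filter onP, ((N + 1 - β.val.length : ℕ) : ℝ)
      ≤ ∑ _β ∈ (upSet α).filter onP, ((N + 1 : ℕ) : ℝ) := by
        apply Finset.sum_le_sum
        intro β _
        exact_mod_cast Nat.cast_le.2 (Nat.sub_le _ _)
    _ = (((upSet α).filter onP).card : ℝ) * ((N + 1 : ℕ) : ℝ) := by
        rw [Finset.sum_const, nsmul_eq_mul]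
    _ ≤ ((N + 1 : ℕ) : ℝ) * ((N + 1 : ℕ) : ℝ) := by
        apply mul_le_mul_of_nonneg_right _ (by positivity)
        have h1 : ((upSet α).filter onP).card ≤ N + 1 := by
          calc ((upSet α).filter onP).card ≤ (upSet α).card := Finset.card_filter_le _ _
            _ = α.val.length + 1 := card_upSet α
            _ ≤ N + 1 := by have := α.len_le; omega
        exact_mod_cast h1

theorem lt_def {a b : Tr N} : a < b ↔ b.val <+: a.val ∧ a.val ≠ b.val := by
  rw [lt_iff_le_and_ne, le_def]
  constructor
  · rintro ⟨h1, h2⟩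
    exact ⟨h1, fun hv => h2 (Tr.ext' hv)⟩
  · rintro ⟨h1, h2⟩
    exact ⟨h1, fun hv => h2 (congrArg Tr.val hv)⟩

theorem lt_length {a b : Tr N} (h : a < b) : b.val.length < a.val.length := by
  obtain ⟨hpre, hne⟩ := lt_def.1 h
  rcases hpre.length_le.lt_or_eq with h' | h'
  · exact h'
  · exact absurd (hpre.eq_of_length h').symm hne

theorem covby_iff {a b : Tr N} :
    a ⋖ b ↔ (a.val = b.val ++ [false] ∨ a.val = b.val ++ [true]) := by
  constructor
  · rintro ⟨hlt, hnb⟩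
    obtain ⟨hpre, hne⟩ := lt_def.1 hlt
    obtain ⟨t, ht⟩ := hpre
    match t, ht with
    | [], ht => exact absurd (by simpa using ht.symm) hne
    | [x], ht =>
      cases x
      · exact Or.inl ht.symm
      · exact Or.inr ht.symm
    | x :: y :: t'', ht =>
      exfalso
      have hlen : a.val.length = b.val.length + (t''.length + 2) := by
        rw [← ht]; simp; try omega
      have hcle : (b.val ++ [x]).length ≤ N := by
        have := a.len_le; simp; omega
      have h1' : a < (⟨b.val ++ [x], hcle⟩ : Tr N) := by
        rw [lt_def]
        constructor
        · exact ⟨y :: t'', by rw [← ht]; simp⟩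
        · intro hv
          have := congrArg List.length hv
          simp at this
          omega
      have h2' : (⟨b.val ++ [x], hcle⟩ : Tr N) < b := by
        rw [lt_def]
        constructor
        · exact ⟨[x], rfl⟩
        · intro hv
          have := congrArg List.length hv
          simp at this
      exact hnb h1' h2'
  · intro h
    have hlen : a.val.length = b.val.length + 1 := by
      rcases h with h | h <;> rw [h] <;> simp
    constructor
    · rw [lt_def]
      constructor
      · rcases h with h | h
        · exact ⟨[false], h.symm⟩
        · exact ⟨[true], h.symm⟩
      · intro hv
        rw [hv] at hlen
        omega
    · intro c h1 h2
      have l1 := lt_length h1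
      have l2 := lt_length h2
      omega

def childF (β : Tr N) (h : β.val.length < N) (b : Bool) : Tr N :=
  ⟨β.val ++ [b], by simp; omega⟩

theorem chSet_eq_empty {β : Tr N} (h : β.val.length = N) : chSet β = ∅ := by
  rw [Finset.eq_empty_iff_forall_notMem]
  intro a ha
  simp only [chSet, Finset.mem_filter, Finset.mem_univ, true_and] at ha
  have hle := a.len_le
  rcases covby_iff.1 ha with h' | h' <;> rw [h'] at hle <;> simp at hle <;> omega

theorem chSet_eq_pair {β : Tr N} (h : β.val.length < N) :
    chSet β = {childF β h false, childF β h true} := by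
  ext a
  simp only [chSet, Finset.mem_filter, Finset.mem_univ, true_and, Finset.mem_insert,
    Finset.mem_singleton, covby_iff]
  constructor
  · rintro (h' | h')
    · exact Or.inl (Tr.ext' h')
    · exact Or.inr (Tr.ext' h')
  · rintro (rfl | rfl)
    · exact Or.inl rfl
    · exact Or.inr rfl

theorem dyadic : IsDyadic (Tr N) := by
  intro β
  rcases lt_or_eq_of_le β.len_le with h | h
  · right
    rw [chSet_eq_pair h, Finset.card_insert_of_notMem, Finset.card_singleton]
    rw [Finset.mem_singleton]
    intro hv
    have := congrArg Tr.val hv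
    simp [childF] at this
  · left
    rw [chSet_eq_empty h, Finset.card_empty]

theorem not_onP_true_child {β : Tr N} (h : β.val.length < N) :
    ¬ onP (childF β h true) := by
  intro hP
  have : (true : Bool) = false :=
    (List.eq_replicate_iff.1 hP).2 true (by simp [childF])
  simp at this

theorem superadd : Superadditive (ff N) := by
  intro β
  rcases lt_or_eq_of_le β.len_le with h | h
  · rw [chSet_eq_pair h, Finset.sum_insert, Finset.sum_singleton]
    · have h1 : ff N (childF β h true) = 0 := if_neg (not_onP_true_child h)
      rw [h1, add_zero]
      by_cases hβ : onP β
      · rw [show ff N β = 1 from if_pos hβ]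
        unfold ff; split <;> norm_num
      · rw [show ff N β = 0 from if_neg hβ]
        rw [show ff N (childF β h false) = 0 from if_neg ?_]
        intro hP
        exact hβ (onP_of_prefix ⟨[false], rfl⟩ hP)
    · rw [Finset.mem_singleton]
      intro hv
      have := congrArg Tr.val hv
      simp [childF] at this
  · rw [chSet_eq_empty h, Finset.sum_empty]
    exact ff_nonneg β

theorem rooted : IsRootedTree (Tr N) :=
  ⟨⟨⟨[], by simp⟩, fun a => le_def.2 (List.nil_prefix)⟩,
    fun a b c h1 h2 =>
      (List.prefix_or_prefix_of_prefix (le_def.1 h1) (le_def.1 h2)).symm⟩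

theorem isMin_om : IsMin (om N) := by
  intro a ha
  have hpre := le_def.1 ha
  have h1 : (om N).val.length = N := len_pv _ _
  have h2 := hpre.length_le
  have h3 := a.len_le
  have : a = om N := Tr.ext' (hpre.eq_of_length (by omega)).symm
  rw [this]

theorem card_path : (Finset.univ.filter (onP (N := N))).card = N + 1 := by
  rw [show N + 1 = (Finset.range (N + 1)).card by simp]
  refine Finset.card_bij' (fun α _ => α.val.length)
    (fun k _ => pv N (min k N) (min_le_right k N)) ?_ ?_ ?_ ?_
  · intro α _
    rw [Finset.mem_range]
    exact Nat.lt_succ_of_le α.len_le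
  · intro k _
    simp only [Finset.mem_filter, Finset.mem_univ, true_and]
    exact onP_pv _ _
  · intro α hα
    simp only [Finset.mem_filter, Finset.mem_univ, true_and] at hα
    apply Tr.ext'
    show List.replicate (min α.val.length N) false = α.val
    rw [min_eq_left α.len_le]
    exact hα.symm
  · intro k hk
    rw [Finset.mem_range] at hk
    show (List.replicate (min k N) false).length = k
    rw [List.length_replicate]
    omega

theorem sum_f_pow {p : ℝ} (hp0 : p ≠ 0) :
    ∑ α : Tr N, (ff N α) ^ p = ((N + 1 : ℕ) : ℝ) := by
  have h1 : ∀ α ∈ (Finset.univ : Finset (Tr N)), (ff N α) ^ p = if onP α then (1:ℝ) else 0 := by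
    intro α _
    unfold ff
    split <;> simp [Real.one_rpow, Real.zero_rpow hp0]
  rw [Finset.sum_congr rfl h1, Finset.sum_boole, card_path]

theorem sum_main {p : ℝ} :
    ∑ α : Tr N, (treeI (ff N) α) ^ p * ff N α
      = ∑ k ∈ Finset.range (N + 1), ((k + 1 : ℕ) : ℝ) ^ p := by
  have h1 : ∀ α ∈ (Finset.univ : Finset (Tr N)), (treeI (ff N) α) ^ p * ff N α
      = if onP α then (treeI (ff N) α) ^ p else 0 := by
    intro α _
    unfold ff
    split <;> simp
  rw [Finset.sum_congr rfl h1, ← Finset.sum_filter]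
  refine Finset.sum_bij' (fun α _ => α.val.length)
    (fun k _ => pv N (min k N) (min_le_right k N)) ?_ ?_ ?_ ?_ ?_
  · intro α _
    rw [Finset.mem_range]
    exact Nat.lt_succ_of_le α.len_le
  · intro k _
    simp only [Finset.mem_filter, Finset.mem_univ, true_and]
    exact onP_pv _ _
  · intro α hα
    simp only [Finset.mem_filter, Finset.mem_univ, true_and] at hα
    apply Tr.ext'
    show List.replicate (min α.val.length N) false = α.val
    rw [min_eq_left α.len_le]
    exact hα.symm
  · intro k hk
    rw [Finset.mem_range] at hk
    show (List.replicate (min k N) false).length = k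
    rw [List.length_replicate]
    omega
  · intro α hα
    simp only [Finset.mem_filter, Finset.mem_univ, true_and] at hα
    rw [treeI_ff hα]

end Stmt14Aux

/-- for `p > 2` and any `C > 0` there is a finite dyadic tree and nonnegative
`f, g`, with `g` superadditive and `sup II*g` attained at a leaf in `supp g`, such that
`∑ (If)^p g > C (sup_{supp g ∩ supp f} II*g) ∑ f^p`.  Hence the `L^p` analogue of the
positive-kernel lemma fails for `p > 2` even for superadditive `g`. -/
theorem stmt_14 (p : ℝ) (hp : 2 < p) (C : ℝ) (hC : 0 < C) :
    ∃ (T : Type) (i1 : Fintype T) (i2 : PartialOrder T),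
      letI := i1; letI := i2;
      IsRootedTree T ∧ IsDyadic T ∧
      ∃ f g : T → ℝ,
        (∀ a, 0 ≤ f a) ∧ (∀ a, 0 ≤ g a) ∧ Superadditive g ∧
        (∃ ω : T, IsMin ω ∧ g ω ≠ 0 ∧
          ∀ α : T, treeI (treeIStar g) α ≤ treeI (treeIStar g) ω) ∧
        C * (⨆ x ∈ {x : T | g x ≠ 0 ∧ f x ≠ 0}, treeI (treeIStar g) x) *
            (∑ α : T, f α ^ p) <
          ∑ α : T, (treeI f α) ^ p * g α := by
  classical
  set q := p - 2 with hq_def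
  have hq : 0 < q := by rw [hq_def]; linarith
  have h8C : (0:ℝ) < 8 * C + 1 := by linarith
  set x := (8 * C + 1) ^ (1 / q) with hx_def
  set r : ℕ := ⌈x⌉₊ + 1 with hr_def
  have hr1 : 1 ≤ r := by omega
  have hx0 : 0 < x := Real.rpow_pos_of_pos h8C _
  have hxr : x ≤ (r : ℝ) := by
    calc x ≤ (⌈x⌉₊ : ℝ) := Nat.le_ceil x
      _ ≤ (r : ℝ) := by rw [hr_def]; push_cast; linarith
  have hrq : 8 * C < (r : ℝ) ^ q := by
    have h1 : x ^ q ≤ (r : ℝ) ^ q := Real.rpow_le_rpow hx0.le hxr hq.le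
    have h2 : x ^ q = 8 * C + 1 := by
      rw [hx_def, ← Real.rpow_mul h8C.le, one_div, inv_mul_cancel₀ hq.ne', Real.rpow_one]
    linarith
  set N : ℕ := 2 * r - 1 with hN_def
  have hM : N + 1 = 2 * r := by omega
  refine ⟨Stmt14Aux.Tr N, inferInstance, inferInstance, Stmt14Aux.rooted, Stmt14Aux.dyadic,
    Stmt14Aux.ff N, Stmt14Aux.ff N, Stmt14Aux.ff_nonneg, Stmt14Aux.ff_nonneg,
    Stmt14Aux.superadd,
    ⟨Stmt14Aux.om N, Stmt14Aux.isMin_om, ?_, fun α => Stmt14Aux.Phi_le α⟩, ?_⟩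
  · rw [show Stmt14Aux.ff N (Stmt14Aux.om N) = 1 from if_pos (Stmt14Aux.onP_pv _ _)]
    norm_num
  · rw [Stmt14Aux.sum_f_pow (ne_of_gt (by linarith : (0:ℝ) < p)), Stmt14Aux.sum_main]
    have hS : ∀ (s : Set (Stmt14Aux.Tr N)),
        (⨆ y ∈ s, treeI (treeIStar (Stmt14Aux.ff N)) y) ≤ ((N+1:ℕ):ℝ) * ((N+1:ℕ):ℝ) := by
      intro s
      apply Real.iSup_le _ (by positivity)
      intro y
      apply Real.iSup_le _ (by positivity)
      intro _
      exact Stmt14Aux.Phi_bound y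
    have hr0 : (0:ℝ) < (r:ℝ) := by exact_mod_cast hr1
    have key : C * (((N+1:ℕ):ℝ) * ((N+1:ℕ):ℝ)) * ((N+1:ℕ):ℝ)
        < ∑ k ∈ Finset.range (N + 1), ((k + 1 : ℕ) : ℝ) ^ p := by
      have hsum : (r:ℝ) * (r:ℝ)^p ≤ ∑ k ∈ Finset.range (N+1), ((k+1:ℕ):ℝ)^p := by
        calc (r:ℝ) * (r:ℝ)^p = ∑ _k ∈ Finset.Ico r (2*r), (r:ℝ)^p := by
              rw [Finset.sum_const, Nat.card_Ico, nsmul_eq_mul,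
                show 2*r - r = r by omega]
          _ ≤ ∑ k ∈ Finset.Ico r (2*r), ((k+1:ℕ):ℝ)^p := by
              apply Finset.sum_le_sum
              intro k hk
              rw [Finset.mem_Ico] at hk
              apply Real.rpow_le_rpow hr0.le ?_ (by linarith)
              exact_mod_cast Nat.le_succ_of_le hk.1
          _ ≤ ∑ k ∈ Finset.range (N+1), ((k+1:ℕ):ℝ)^p := by
              apply Finset.sum_le_sum_of_subset_of_nonneg
              · intro k hk
                rw [Finset.mem_Ico] at hk
                rw [Finset.mem_range]
                omega
              · intro k _ _
                positivity
      have hid : (r:ℝ) * (r:ℝ)^p = (r:ℝ)^q * ((r:ℝ)*(r:ℝ)*(r:ℝ)) := by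
        have h1 : (r:ℝ)^p = (r:ℝ)^q * (r:ℝ)^(2:ℝ) := by
          rw [← Real.rpow_add hr0]
          congr 1
          rw [hq_def]; ring
        rw [h1, show ((2:ℝ)) = ((2:ℕ):ℝ) by norm_num, Real.rpow_natCast]
        ring
      have hcube : (0:ℝ) < (r:ℝ)*(r:ℝ)*(r:ℝ) := by positivity
      have h2 : C * (((N+1:ℕ):ℝ) * ((N+1:ℕ):ℝ)) * ((N+1:ℕ):ℝ)
          = 8 * C * ((r:ℝ)*(r:ℝ)*(r:ℝ)) := by
        rw [hM]; push_cast; ring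
      rw [h2]
      calc 8 * C * ((r:ℝ)*(r:ℝ)*(r:ℝ)) < (r:ℝ)^q * ((r:ℝ)*(r:ℝ)*(r:ℝ)) :=
            mul_lt_mul_of_pos_right hrq hcube
        _ = (r:ℝ) * (r:ℝ)^p := hid.symm
        _ ≤ _ := hsum
    refine lt_of_le_of_lt ?_ key
    apply mul_le_mul_of_nonneg_right _ (by positivity)
    exact mul_le_mul_of_nonneg_left (hS _) hC.le
end
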